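/- Let (u_{0,n})_n be a sequence in H converging in norm to u₀ ∈ H, and let f, f_n ∈ L²((0,T),U). Denote by u and u_n the mild solutions with data (u₀, f) for (S, B) and (u_{0,n}, f_n) for (S_n, B_n), respectively. If f_n → f in the norm of L²((0,T),U), then u_n(t) → u(t) in H for every t ∈ (0,T], and u_n → u in L²((0,T),H). -/

import Mathlib

open MeasureTheory Set Filter
open scoped InnerProductSpace Topology ENNReal

/-!
The free terms converge because `‖Sₙ t‖ ≤ e^{|a| T}` on `[0, T]` and `Sₙ t → S t` strongly.
For the convolution write `Bₙ fₙ = Bₙ (fₙ - f) + Bₙ f`: the `Bₙ` are uniformly bounded by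
Banach–Steinhaus, so the first part is controlled by `‖fₙ - f‖_{L¹} ≤ c ‖fₙ - f‖_{L²}`, and the
second part converges by dominated convergence. The same estimates bound `‖uₙ t‖` uniformly in
`n` and `t`, so `L²` convergence follows from bounded convergence, `u` being measurable as the
pointwise limit of the `uₙ`.
-/

section OperatorSequences

variable {𝕜 E F : Type*} [NontriviallyNormedField 𝕜]
  [NormedAddCommGroup E] [NormedSpace 𝕜 E] [NormedAddCommGroup F] [NormedSpace 𝕜 F]

theorem exists_norm_le_of_tendsto_apply [CompleteSpace E] {A : ℕ → E →L[𝕜] F} {A₀ : E →L[𝕜] F}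
    (h : ∀ x, Tendsto (fun n => A n x) atTop (𝓝 (A₀ x))) : ∃ C, ∀ n, ‖A n‖ ≤ C :=
  banach_steinhaus fun x => by
    obtain ⟨C, hC⟩ := (h x).norm.bddAbove_range
    exact ⟨C, fun n => hC ⟨n, rfl⟩⟩

theorem tendsto_apply_of_eventually_norm_le {ι : Type*} {l : Filter ι}
    {A : ι → E →L[𝕜] F} {A₀ : E →L[𝕜] F} {C : ℝ} (hC : ∀ᶠ i in l, ‖A i‖ ≤ C)
    (hA : ∀ x, Tendsto (fun i => A i x) l (𝓝 (A₀ x)))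
    {x : ι → E} {x₀ : E} (hx : Tendsto x l (𝓝 x₀)) :
    Tendsto (fun i => A i (x i)) l (𝓝 (A₀ x₀)) := by
  have hsmall : Tendsto (fun i => A i (x i - x₀)) l (𝓝 0) := by
    refine squeeze_zero_norm' ?_ (by simpa using (hx.sub_const x₀).norm.const_mul C)
    filter_upwards [hC] with i hi
    exact (A i).le_of_opNorm_le hi _
  simpa using hsmall.add (hA x₀)

end OperatorSequences

section Integrals

variable {α 𝕜 E F : Type*} [MeasurableSpace α] {μ : Measure α} [NontriviallyNormedField 𝕜]
  [NormedAddCommGroup E] [NormedSpace 𝕜 E] [NormedAddCommGroup F] [NormedSpace 𝕜 F]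

theorem integrable_clm_apply {Φ : α → E →L[𝕜] F} {C : ℝ} {g : α → E}
    (hmeas : AEStronglyMeasurable (fun s => Φ s (g s)) μ) (hΦ : ∀ᵐ s ∂μ, ‖Φ s‖ ≤ C)
    (hg : Integrable g μ) : Integrable (fun s => Φ s (g s)) μ := by
  refine (hg.norm.const_mul C).mono' hmeas ?_
  filter_upwards [hΦ] with s hs
  exact (Φ s).le_of_opNorm_le hs _

variable [NormedSpace ℝ F]

theorem norm_integral_clm_apply_le {Φ : α → E →L[𝕜] F} {C : ℝ} {g : α → E}
    (hΦ : ∀ᵐ s ∂μ, ‖Φ s‖ ≤ C) (hg : Integrable g μ) :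
    ‖∫ s, Φ s (g s) ∂μ‖ ≤ C * ∫ s, ‖g s‖ ∂μ := by
  rw [← integral_const_mul]
  refine norm_integral_le_of_norm_le (hg.norm.const_mul C) ?_
  filter_upwards [hΦ] with s hs
  exact (Φ s).le_of_opNorm_le hs _

theorem tendsto_integral_clm_apply {Φ : ℕ → α → E →L[𝕜] F} {Ψ : α → E →L[𝕜] F} {C : ℝ}
    (hmeas : ∀ n {h : α → E}, AEStronglyMeasurable h μ →
      AEStronglyMeasurable (fun s => Φ n s (h s)) μ)
    (hΦ : ∀ n, ∀ᵐ s ∂μ, ‖Φ n s‖ ≤ C) {g : ℕ → α → E} {g₀ : α → E}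
    (hΦΨ : ∀ᵐ s ∂μ, Tendsto (fun n => Φ n s (g₀ s)) atTop (𝓝 (Ψ s (g₀ s))))
    (hg : ∀ n, Integrable (g n) μ) (hg₀ : Integrable g₀ μ)
    (hL1 : Tendsto (fun n => ∫ s, ‖g n s - g₀ s‖ ∂μ) atTop (𝓝 0)) :
    Tendsto (fun n => ∫ s, Φ n s (g n s) ∂μ) atTop (𝓝 (∫ s, Ψ s (g₀ s) ∂μ)) := by
  have hint : ∀ n {h : α → E}, Integrable h μ → Integrable (fun s => Φ n s (h s)) μ :=
    fun n _ hh => integrable_clm_apply (hmeas n hh.1) (hΦ n) hh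
  have hsplit : ∀ n, ∫ s, Φ n s (g n s) ∂μ =
      ∫ s, Φ n s (g n s - g₀ s) ∂μ + ∫ s, Φ n s (g₀ s) ∂μ := fun n => by
    rw [← integral_add (hint n (h := fun s => g n s - g₀ s) ((hg n).sub hg₀)) (hint n hg₀)]
    simp only [map_sub, sub_add_cancel]
  have hdiff : Tendsto (fun n => ∫ s, Φ n s (g n s - g₀ s) ∂μ) atTop (𝓝 0) :=
    squeeze_zero_norm (fun n => norm_integral_clm_apply_le (hΦ n) ((hg n).sub hg₀))
      (by simpa using hL1.const_mul C)
  have hdom : Tendsto (fun n => ∫ s, Φ n s (g₀ s) ∂μ) atTop (𝓝 (∫ s, Ψ s (g₀ s) ∂μ)) := by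
    refine tendsto_integral_of_dominated_convergence _ (fun n => hmeas n hg₀.1)
      (hg₀.norm.const_mul C) (fun n => ?_) hΦΨ
    filter_upwards [hΦ n] with s hs
    exact (Φ n s).le_of_opNorm_le hs _
  simpa only [hsplit, zero_add] using hdiff.add hdom

end Integrals

section Lebesgue

variable {α E : Type*} [MeasurableSpace α] {μ : Measure α} [IsFiniteMeasure μ]
  [NormedAddCommGroup E]

theorem tendsto_integral_norm_sub_of_tendsto_Lp {q : ℝ≥0∞} [Fact (1 ≤ q)]
    {g : ℕ → Lp E q μ} {g₀ : Lp E q μ} (h : Tendsto g atTop (𝓝 g₀)) :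
    Tendsto (fun n => ∫ s, ‖g n s - g₀ s‖ ∂μ) atTop (𝓝 0) := by
  have hmeas n : AEStronglyMeasurable (⇑(g n) - ⇑g₀) μ :=
    (Lp.aestronglyMeasurable (g n)).sub (Lp.aestronglyMeasurable g₀)
  have hq : Tendsto (fun n => eLpNorm (⇑(g n) - ⇑g₀) q μ) atTop (𝓝 0) :=
    (Lp.tendsto_Lp_iff_tendsto_eLpNorm' g g₀).mp h
  have hone : Tendsto (fun n => eLpNorm (⇑(g n) - ⇑g₀) 1 μ) atTop (𝓝 0) := by
    have hq_inv : q.toReal⁻¹ ≤ 1 := by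
      rcases eq_or_ne q ∞ with rfl | hq_top
      · simp
      · exact inv_le_one_of_one_le₀ (by simpa using ENNReal.toReal_mono hq_top (Fact.out : 1 ≤ q))
    have hvol : μ univ ^ (1 / (1 : ℝ≥0∞).toReal - 1 / q.toReal) ≠ ∞ :=
      ENNReal.rpow_ne_top_of_nonneg (by simpa using hq_inv) (measure_ne_top μ univ)
    refine tendsto_of_tendsto_of_tendsto_of_le_of_le tendsto_const_nhds
      (by simpa using ENNReal.Tendsto.mul_const hq (Or.inr hvol)) (fun n => zero_le)
      (fun n => eLpNorm_le_eLpNorm_mul_rpow_measure_univ (Fact.out : 1 ≤ q) (hmeas n))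
  have heq : ∀ n, ∫ s, ‖g n s - g₀ s‖ ∂μ = (eLpNorm (⇑(g n) - ⇑g₀) 1 μ).toReal := fun n => by
    rw [toReal_eLpNorm (hmeas n), lpNorm_one_eq_integral_norm (hmeas n)]
    rfl
  simp only [heq]
  exact (ENNReal.tendsto_toReal ENNReal.zero_ne_top).comp hone

end Lebesgue

section BoundedConvergence

variable {α E : Type*} [MeasurableSpace α] {μ : Measure α} [NormedAddCommGroup E]

theorem exists_integral_norm_le_of_tendsto {g : ℕ → α → E} {g₀ : α → E}
    (hg : ∀ n, Integrable (g n) μ) (hg₀ : Integrable g₀ μ)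
    (hL1 : Tendsto (fun n => ∫ s, ‖g n s - g₀ s‖ ∂μ) atTop (𝓝 0)) :
    ∃ R, ∀ n, ∫ s, ‖g n s‖ ∂μ ≤ R := by
  obtain ⟨R, hR⟩ := hL1.bddAbove_range
  refine ⟨R + ∫ s, ‖g₀ s‖ ∂μ, fun n => ?_⟩
  calc ∫ s, ‖g n s‖ ∂μ ≤ ∫ s, (‖g n s - g₀ s‖ + ‖g₀ s‖) ∂μ :=
        integral_mono (hg n).norm (((hg n).sub hg₀).norm.add hg₀.norm)
          fun s => norm_le_norm_sub_add _ _
    _ = ∫ s, ‖g n s - g₀ s‖ ∂μ + ∫ s, ‖g₀ s‖ ∂μ :=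
        integral_add ((hg n).sub hg₀).norm hg₀.norm
    _ ≤ R + ∫ s, ‖g₀ s‖ ∂μ := by gcongr; exact hR ⟨n, rfl⟩

theorem tendsto_integral_norm_sub_pow_of_norm_le [IsFiniteMeasure μ] {F : ℕ → α → E}
    {F₀ : α → E} {K : ℝ} {p : ℕ} (hp : p ≠ 0) (hF : ∀ n, AEStronglyMeasurable (F n) μ)
    (hK : ∀ n, ∀ᵐ s ∂μ, ‖F n s‖ ≤ K)
    (hlim : ∀ᵐ s ∂μ, Tendsto (fun n => F n s) atTop (𝓝 (F₀ s))) :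
    Tendsto (fun n => ∫ s, ‖F n s - F₀ s‖ ^ p ∂μ) atTop (𝓝 0) := by
  have hF₀ : AEStronglyMeasurable F₀ μ := aestronglyMeasurable_of_tendsto_ae atTop hF hlim
  have hK₀ : ∀ᵐ s ∂μ, ‖F₀ s‖ ≤ K := by
    filter_upwards [hlim, ae_all_iff.mpr hK] with s hs hsK
    exact le_of_tendsto' hs.norm hsK
  have hlim' : ∀ᵐ s ∂μ, Tendsto (fun n => ‖F n s - F₀ s‖ ^ p) atTop (𝓝 0) := by
    filter_upwards [hlim] with s hs
    simpa [hp] using ((hs.sub_const (F₀ s)).norm).pow p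
  simpa using tendsto_integral_of_dominated_convergence (F := fun n s => ‖F n s - F₀ s‖ ^ p)
    (fun _ => (K + K) ^ p) (fun n => ((hF n).sub hF₀).norm.pow p) (integrable_const _) (fun n => by
      filter_upwards [hK n, hK₀] with s hs hs₀
      rw [Real.norm_of_nonneg (pow_nonneg (norm_nonneg _) p)]
      exact pow_le_pow_left₀ (norm_nonneg _) ((norm_sub_le _ _).trans (add_le_add hs hs₀)) p)
    hlim'

end BoundedConvergence

theorem Real.exp_neg_mul_le_exp_abs_mul {a t T : ℝ} (ht : 0 ≤ t) (htT : t ≤ T) :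
    Real.exp (-(t * a)) ≤ Real.exp (|a| * T) := by
  rw [Real.exp_le_exp]
  nlinarith [neg_abs_le a, abs_nonneg a]

section Semigroup

variable {𝕜 E U : Type*} [NontriviallyNormedField 𝕜] [NormedAddCommGroup E] [NormedSpace 𝕜 E]
  [NormedAddCommGroup U] [NormedSpace 𝕜 U]

structure IsExpBoundedStronglyContinuous (S : ℝ → E →L[𝕜] E) (a : ℝ) : Prop where
  continuousOn_apply : ∀ x, ContinuousOn (fun t => S t x) (Ici 0)
  norm_le : ∀ t, 0 ≤ t → ‖S t‖ ≤ Real.exp (-(t * a))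

namespace IsExpBoundedStronglyContinuous

variable {S : ℝ → E →L[𝕜] E} {a : ℝ}

theorem norm_le_exp_abs_mul (hS : IsExpBoundedStronglyContinuous S a) {t T : ℝ} (ht : 0 ≤ t)
    (htT : t ≤ T) : ‖S t‖ ≤ Real.exp (|a| * T) :=
  (hS.norm_le t ht).trans (Real.exp_neg_mul_le_exp_abs_mul ht htT)

theorem norm_comp_le (hS : IsExpBoundedStronglyContinuous S a) {L : U →L[𝕜] E} {M r T : ℝ}
    (hL : ‖L‖ ≤ M) (hr : 0 ≤ r) (hrT : r ≤ T) : ‖(S r).comp L‖ ≤ Real.exp (|a| * T) * M :=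
  ((S r).opNorm_comp_le L).trans
    (mul_le_mul (hS.norm_le_exp_abs_mul hr hrT) hL (norm_nonneg _) (Real.exp_pos _).le)

/-- `max · 0` extends `S` continuously to negative times. -/
theorem continuous_uncurry_max (hS : IsExpBoundedStronglyContinuous S a) :
    Continuous fun p : ℝ × E => S (max p.1 0) p.2 := by
  refine continuous_iff_continuousAt.2 fun p₀ => ?_
  have hbound : ∀ᶠ p : ℝ × E in 𝓝 p₀, ‖S (max p.1 0)‖ ≤ Real.exp (|a| * (|p₀.1| + 1)) := by
    filter_upwards [continuous_fst.continuousAt.eventually_lt continuousAt_const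
      (show p₀.1 < |p₀.1| + 1 by linarith [le_abs_self p₀.1])] with p hp
    exact hS.norm_le_exp_abs_mul (le_max_right _ _) (max_le hp.le (by positivity))
  have hcont : ∀ x, Continuous fun r : ℝ => S (max r 0) x := fun x =>
    (hS.continuousOn_apply x).comp_continuous (continuous_id.max continuous_const)
      fun r => le_max_right r 0
  exact tendsto_apply_of_eventually_norm_le hbound
    (fun x => ((hcont x).comp continuous_fst).continuousAt) continuous_snd.continuousAt

variable {α : Type*} [MeasurableSpace α] {μ : Measure α}

theorem aestronglyMeasurable_apply (hS : IsExpBoundedStronglyContinuous S a) {τ : α → ℝ}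
    {h : α → E} (hτ : AEStronglyMeasurable τ μ) (hτ0 : ∀ᵐ s ∂μ, 0 ≤ τ s)
    (hh : AEStronglyMeasurable h μ) : AEStronglyMeasurable (fun s => S (τ s) (h s)) μ := by
  refine (hS.continuous_uncurry_max.comp_aestronglyMeasurable (hτ.prodMk hh)).congr ?_
  filter_upwards [hτ0] with s hs
  simp [max_eq_left hs]

variable [NormedSpace ℝ E]

/-- The convolution is the fibrewise integral of `(t, s) ↦ 1_{s < t} S (t - s) (h s)`, which is
jointly measurable. -/
theorem aestronglyMeasurable_setIntegral_conv (hS : IsExpBoundedStronglyContinuous S a)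
    {T : ℝ} {h : ℝ → E} (hh : AEStronglyMeasurable h (volume.restrict (Ioo 0 T))) :
    AEStronglyMeasurable (fun t => ∫ s in Ioo 0 t, S (t - s) (h s))
      (volume.restrict (Ioo 0 T)) := by
  set μT := volume.restrict (Ioo (0 : ℝ) T)
  set Φ : ℝ × ℝ → E := {q : ℝ × ℝ | q.2 < q.1}.indicator fun q => S (max (q.1 - q.2) 0) (h q.2)
  have hΦ : AEStronglyMeasurable Φ (μT.prod μT) :=
    (hS.continuous_uncurry_max.comp_aestronglyMeasurable
      ((continuous_fst.sub continuous_snd).aestronglyMeasurable.prodMk hh.comp_snd)).indicator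
      (measurableSet_lt measurable_snd measurable_fst)
  refine hΦ.integral_prod_right'.congr ?_
  filter_upwards [ae_restrict_mem measurableSet_Ioo] with t ht
  have hinter : Ioo 0 T ∩ Iio t = Ioo 0 t := by
    rw [Ioo_inter_Iio, min_eq_right ht.2.le]
  calc ∫ s, Φ (t, s) ∂μT
      = ∫ s in Ioo 0 T ∩ Iio t, S (max (t - s) 0) (h s) := by
        rw [← setIntegral_indicator measurableSet_Iio]
        rfl
    _ = ∫ s in Ioo 0 t, S (t - s) (h s) := by
        rw [hinter]
        refine setIntegral_congr_fun measurableSet_Ioo fun s hs => ?_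
        simp [max_eq_left (sub_nonneg.2 hs.2.le)]

end IsExpBoundedStronglyContinuous

variable [NormedSpace ℝ E]

theorem tendsto_setIntegral_conv {Sn : ℕ → ℝ → E →L[𝕜] E} {S : ℝ → E →L[𝕜] E} {a T t : ℝ}
    (hSn : ∀ n, IsExpBoundedStronglyContinuous (Sn n) a)
    (hSconv : ∀ r, 0 < r → ∀ x, Tendsto (fun n => Sn n r x) atTop (𝓝 (S r x)))
    {Bn : ℕ → U →L[𝕜] E} {B : U →L[𝕜] E} {M : ℝ} (hM : ∀ n, ‖Bn n‖ ≤ M)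
    (hBconv : ∀ v, Tendsto (fun n => Bn n v) atTop (𝓝 (B v)))
    {g : ℕ → ℝ → U} {g₀ : ℝ → U} (hg : ∀ n, IntegrableOn (g n) (Ioo 0 T))
    (hg₀ : IntegrableOn g₀ (Ioo 0 T))
    (hL1 : Tendsto (fun n => ∫ s in Ioo 0 T, ‖g n s - g₀ s‖) atTop (𝓝 0)) (htT : t ≤ T) :
    Tendsto (fun n => ∫ s in Ioo 0 t, Sn n (t - s) (Bn n (g n s))) atTop
      (𝓝 (∫ s in Ioo 0 t, S (t - s) (B (g₀ s)))) := by
  have hsub : Ioo 0 t ⊆ Ioo 0 T := Ioo_subset_Ioo_right htT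
  have hmem : ∀ᵐ s ∂(volume.restrict (Ioo 0 t)), 0 < t - s ∧ t - s ≤ T := by
    filter_upwards [ae_restrict_mem measurableSet_Ioo] with s hs
    exact ⟨sub_pos.2 hs.2, by linarith [hs.1]⟩
  refine tendsto_integral_clm_apply (Φ := fun n s => (Sn n (t - s)).comp (Bn n))
    (Ψ := fun s => (S (t - s)).comp B) (C := Real.exp (|a| * T) * M)
    (fun n h hh => (hSn n).aestronglyMeasurable_apply (τ := fun s => t - s)
      (continuous_const.sub continuous_id).aestronglyMeasurable
      (hmem.mono fun s hs => hs.1.le) ((Bn n).continuous.comp_aestronglyMeasurable hh))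
    (fun n => hmem.mono fun s hs => (hSn n).norm_comp_le (hM n) hs.1.le hs.2) ?_
    (fun n => (hg n).mono_set hsub) (hg₀.mono_set hsub) ?_
  · filter_upwards [hmem] with s hs
    exact tendsto_apply_of_eventually_norm_le
      (.of_forall fun n => (hSn n).norm_le_exp_abs_mul hs.1.le hs.2)
      (hSconv _ hs.1) (hBconv (g₀ s))
  · refine squeeze_zero (fun n => integral_nonneg fun s => norm_nonneg _) (fun n => ?_) hL1
    exact setIntegral_mono_set ((hg n).sub hg₀).norm (.of_forall fun s => norm_nonneg _)
      hsub.eventuallyLE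

def IsMildSolution (S : ℝ → E →L[𝕜] E) (B : U →L[𝕜] E) (T : ℝ) (x : E) (g : ℝ → U)
    (u : ℝ → E) : Prop :=
  ∀ t ∈ Icc 0 T, u t = S t x + ∫ s in Ioo 0 t, S (t - s) (B (g s))

namespace IsMildSolution

variable {S : ℝ → E →L[𝕜] E} {a : ℝ} {B : U →L[𝕜] E} {T : ℝ} {x : E} {g : ℝ → U} {u : ℝ → E}

theorem norm_le (hu : IsMildSolution S B T x g u) (hS : IsExpBoundedStronglyContinuous S a)
    (hg : IntegrableOn g (Ioo 0 T)) {t : ℝ} (ht : t ∈ Icc 0 T) :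
    ‖u t‖ ≤ Real.exp (|a| * T) * (‖x‖ + ‖B‖ * ∫ s in Ioo 0 T, ‖g s‖) := by
  obtain ⟨ht0, htT⟩ := ht
  have hsub : Ioo 0 t ⊆ Ioo 0 T := Ioo_subset_Ioo_right htT
  have hconv : ‖∫ s in Ioo 0 t, S (t - s) (B (g s))‖ ≤
      Real.exp (|a| * T) * ‖B‖ * ∫ s in Ioo 0 t, ‖g s‖ := by
    refine norm_integral_clm_apply_le (Φ := fun s => (S (t - s)).comp B) ?_ (hg.mono_set hsub)
    filter_upwards [ae_restrict_mem measurableSet_Ioo] with s hs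
    exact hS.norm_comp_le le_rfl (sub_nonneg.2 hs.2.le) (by linarith [hs.1])
  have hmono : ∫ s in Ioo 0 t, ‖g s‖ ≤ ∫ s in Ioo 0 T, ‖g s‖ :=
    setIntegral_mono_set hg.norm (.of_forall fun s => norm_nonneg _) hsub.eventuallyLE
  rw [hu t ⟨ht0, htT⟩]
  calc ‖S t x + ∫ s in Ioo 0 t, S (t - s) (B (g s))‖
      ≤ Real.exp (|a| * T) * ‖x‖ + Real.exp (|a| * T) * ‖B‖ * ∫ s in Ioo 0 T, ‖g s‖ :=
        (norm_add_le _ _).trans (add_le_add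
          ((S t).le_of_opNorm_le (hS.norm_le_exp_abs_mul ht0 htT) x) (hconv.trans (by gcongr)))
    _ = Real.exp (|a| * T) * (‖x‖ + ‖B‖ * ∫ s in Ioo 0 T, ‖g s‖) := by ring

theorem aestronglyMeasurable (hu : IsMildSolution S B T x g u)
    (hS : IsExpBoundedStronglyContinuous S a)
    (hg : AEStronglyMeasurable g (volume.restrict (Ioo 0 T))) :
    AEStronglyMeasurable u (volume.restrict (Ioo 0 T)) := by
  have hfree : ContinuousOn (fun t => S t x) (Ioo 0 T) :=
    (hS.continuousOn_apply x).mono (Ioo_subset_Ioi_self.trans Ioi_subset_Ici_self)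
  have hconv := hS.aestronglyMeasurable_setIntegral_conv (B.continuous.comp_aestronglyMeasurable hg)
  refine ((hfree.aestronglyMeasurable measurableSet_Ioo).add hconv).congr ?_
  filter_upwards [ae_restrict_mem measurableSet_Ioo] with t ht
  exact (hu t (Ioo_subset_Icc_self ht)).symm

end IsMildSolution

end Semigroup

theorem mild_solutions_converge_strongly_general
    {H U : Type*}
    [NormedAddCommGroup H] [InnerProductSpace ℂ H]
    [NormedAddCommGroup U] [InnerProductSpace ℂ U] [CompleteSpace U]
    (a T : ℝ)
    (S : ℝ → H →L[ℂ] H) (Sn : ℕ → ℝ → H →L[ℂ] H)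
    (hSncont : ∀ n, ∀ x : H, ContinuousOn (fun t => Sn n t x) (Ici (0:ℝ)))
    (hSnbound : ∀ n, ∀ t : ℝ, 0 ≤ t → ‖Sn n t‖ ≤ Real.exp (-(t * a)))
    (hSconv : ∀ t : ℝ, 0 < t → ∀ x : H,
      Tendsto (fun n => Sn n t x) atTop (nhds (S t x)))
    (B : U →L[ℂ] H) (Bn : ℕ → U →L[ℂ] H)
    (hBconv : ∀ v : U, Tendsto (fun n => Bn n v) atTop (nhds (B v)))
    (u₀ : H) (u0n : ℕ → H)
    (hu0conv : Tendsto (fun n => u0n n) atTop (nhds u₀))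
    (f : Lp U 2 (volume.restrict (Ioo (0:ℝ) T)))
    (fn : ℕ → Lp U 2 (volume.restrict (Ioo (0:ℝ) T)))
    (u : ℝ → H) (un : ℕ → ℝ → H)
    (hu : ∀ t ∈ Icc (0:ℝ) T,
      u t = S t u₀ + ∫ s in Ioo (0:ℝ) t, S (t - s) (B (f s)))
    (hun : ∀ n, ∀ t ∈ Icc (0:ℝ) T,
      un n t = Sn n t (u0n n) + ∫ s in Ioo (0:ℝ) t, Sn n (t - s) (Bn n (fn n s)))
    (hfconv : Tendsto (fun n => fn n) atTop (nhds f)) :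
    (∀ t ∈ Ioc (0:ℝ) T, Tendsto (fun n => un n t) atTop (nhds (u t))) ∧
    Tendsto (fun n => ∫ t in Ioo (0:ℝ) T, ‖un n t - u t‖ ^ 2) atTop (nhds 0) := by
  have hSn n : IsExpBoundedStronglyContinuous (Sn n) a := ⟨hSncont n, hSnbound n⟩
  obtain ⟨M, hM⟩ := exists_norm_le_of_tendsto_apply hBconv
  have hfn n : IntegrableOn (fn n) (Ioo 0 T) := (Lp.memLp (fn n)).integrable one_le_two
  have hf : IntegrableOn f (Ioo 0 T) := (Lp.memLp f).integrable one_le_two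
  have hL1 := tendsto_integral_norm_sub_of_tendsto_Lp hfconv
  have hpoint : ∀ t ∈ Ioc 0 T, Tendsto (fun n => un n t) atTop (𝓝 (u t)) := by
    rintro t ⟨ht, htT⟩
    rw [hu t ⟨ht.le, htT⟩]
    refine Tendsto.congr (fun n => (hun n t ⟨ht.le, htT⟩).symm) ?_
    exact (tendsto_apply_of_eventually_norm_le
      (.of_forall fun n => (hSn n).norm_le_exp_abs_mul ht.le htT) (hSconv t ht) hu0conv).add
      (tendsto_setIntegral_conv hSn hSconv hM hBconv hfn hf hL1 htT)
  obtain ⟨R₀, hR₀⟩ := hu0conv.norm.bddAbove_range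
  obtain ⟨R₁, hR₁⟩ := exists_integral_norm_le_of_tendsto hfn hf hL1
  refine ⟨hpoint, tendsto_integral_norm_sub_pow_of_norm_le two_ne_zero
    (K := Real.exp (|a| * T) * (R₀ + M * R₁))
    (fun n => IsMildSolution.aestronglyMeasurable (hun n) (hSn n) (Lp.aestronglyMeasurable _))
    (fun n => ?_) ?_⟩
  · filter_upwards [ae_restrict_mem measurableSet_Ioo] with t ht
    refine (IsMildSolution.norm_le (hun n) (hSn n) (hfn n) (Ioo_subset_Icc_self ht)).trans ?_
    have hM0 : 0 ≤ M := (norm_nonneg _).trans (hM 0)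
    gcongr
    · exact hR₀ ⟨n, rfl⟩
    · exact hM n
    · exact hR₁ n
  · filter_upwards [ae_restrict_mem measurableSet_Ioo] with t ht
    exact hpoint t (Ioo_subset_Ioc_self ht)

theorem mild_solutions_converge_strongly
    {H U : Type*}
    [NormedAddCommGroup H] [InnerProductSpace ℂ H] [CompleteSpace H]
    [NormedAddCommGroup U] [InnerProductSpace ℂ U] [CompleteSpace U]
    (a T : ℝ) (hT : 0 < T)
    (S : ℝ → H →L[ℂ] H) (Sn : ℕ → ℝ → H →L[ℂ] H)
    (hS0 : S 0 = 1)
    (hSsemi : ∀ t s : ℝ, 0 ≤ t → 0 ≤ s → S (t + s) = (S t).comp (S s))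
    (hScont : ∀ x : H, ContinuousOn (fun t => S t x) (Ici (0:ℝ)))
    (hSbound : ∀ t : ℝ, 0 ≤ t → ‖S t‖ ≤ Real.exp (-(t * a)))
    (hSn0 : ∀ n, Sn n 0 = 1)
    (hSnsemi : ∀ n, ∀ t s : ℝ, 0 ≤ t → 0 ≤ s →
      Sn n (t + s) = (Sn n t).comp (Sn n s))
    (hSncont : ∀ n, ∀ x : H, ContinuousOn (fun t => Sn n t x) (Ici (0:ℝ)))
    (hSnbound : ∀ n, ∀ t : ℝ, 0 ≤ t → ‖Sn n t‖ ≤ Real.exp (-(t * a)))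
    (hSconv : ∀ t : ℝ, 0 < t → ∀ x : H,
      Tendsto (fun n => Sn n t x) atTop (nhds (S t x)))
    (B : U →L[ℂ] H) (Bn : ℕ → U →L[ℂ] H)
    (hBconv : ∀ v : U, Tendsto (fun n => Bn n v) atTop (nhds (B v)))
    (hBadjconv : ∀ x : H,
      Tendsto (fun n => ContinuousLinearMap.adjoint (Bn n) x) atTop
        (nhds (ContinuousLinearMap.adjoint B x)))
    (u₀ : H) (u0n : ℕ → H)
    (hu0conv : Tendsto (fun n => u0n n) atTop (nhds u₀))
    (f : Lp U 2 (volume.restrict (Ioo (0:ℝ) T)))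
    (fn : ℕ → Lp U 2 (volume.restrict (Ioo (0:ℝ) T)))
    (u : ℝ → H) (un : ℕ → ℝ → H)
    (hu : ∀ t ∈ Icc (0:ℝ) T,
      u t = S t u₀ + ∫ s in Ioo (0:ℝ) t, S (t - s) (B (f s)))
    (hun : ∀ n, ∀ t ∈ Icc (0:ℝ) T,
      un n t = Sn n t (u0n n) + ∫ s in Ioo (0:ℝ) t, Sn n (t - s) (Bn n (fn n s)))
    (hfconv : Tendsto (fun n => fn n) atTop (nhds f)) :
    (∀ t ∈ Ioc (0:ℝ) T, Tendsto (fun n => un n t) atTop (nhds (u t))) ∧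
    Tendsto (fun n => ∫ t in Ioo (0:ℝ) T, ‖un n t - u t‖ ^ 2) atTop (nhds 0) :=
  mild_solutions_converge_strongly_general a T S Sn hSncont hSnbound hSconv B Bn hBconv u₀ u0n
    hu0conv f fn u un hu hun hfconv
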